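/- Let 0<q₁<1 and 0<q₂<1, let β,δ>0, μ,ν>0 and η,ζ>−1 be real parameters, let u : [0,∞)→[0,∞) be continuous, and let f,g,h : [0,∞)→ℝ be continuous pairwise synchronous functions satisfying ψ ≤ f(x) ≤ Ψ, φ ≤ g(x) ≤ Φ and ω ≤ h(x) ≤ Ω for all x ∈ [0,∞), where ψ,Ψ,φ,Φ,ω,Ω are real constants. Then for all t>0: | I_{q₁}^{η,μ,β}{u·f·g·h}(t)·I_{q₂}^{ζ,ν,δ}{u}(t) + I_{q₁}^{η,μ,β}{u·h}(t)·I_{q₂}^{ζ,ν,δ}{u·f·g}(t) + I_{q₁}^{η,μ,β}{u·g}(t)·I_{q₂}^{ζ,ν,δ}{u·f·h}(t) + I_{q₁}^{η,μ,β}{u·f}(t)·I_{q₂}^{ζ,ν,δ}{u·g·h}(t) − I_{q₁}^{η,μ,β}{u·g·h}(t)·I_{q₂}^{ζ,ν,δ}{u·f}(t) − I_{q₁}^{η,μ,β}{u·f·h}(t)·I_{q₂}^{ζ,ν,δ}{u·g}(t) − I_{q₁}^{η,μ,β}{u·f·g}(t)·I_{q₂}^{ζ,ν,δ}{u·h}(t)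 − I_{q₁}^{η,μ,β}{u}(t)·I_{q₂}^{ζ,ν,δ}{u·f·g·h}(t) | ≤ I_{q₁}^{η,μ,β}{u}(t)·I_{q₂}^{ζ,ν,δ}{u}(t)·(Ψ−ψ)(Φ−φ)(Ω−ω). -/

import Mathlib

open scoped BigOperators

/-- The q-shifted factorial (a;q)_k = prod_{j<k} (1 - a q^j). -/
noncomputable def qPoch (q a : ℝ) (k : ℕ) : ℝ :=
  ∏ j ∈ Finset.range k, (1 - a * q ^ j)

/-- Generalized Erdélyi–Kober fractional q-integral
    I_q^{η,μ,β}{f}(t) = β(1-q^{1/β})(1-q)^{μ-1} ∑_k ((q^μ;q)_k/(q;q)_k) q^{k(η+1)} f(t q^{k/β}). -/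
noncomputable def EK (q η μ β : ℝ) (f : ℝ → ℝ) (t : ℝ) : ℝ :=
  β * (1 - q ^ (1 / β)) * (1 - q) ^ (μ - 1) *
    ∑' k : ℕ, qPoch q (q ^ μ) k / qPoch q q k * q ^ ((k : ℝ) * (η + 1)) * f (t * q ^ ((k : ℝ) / β))

def Synchronous (f g : ℝ → ℝ) : Prop :=
  ∀ x y : ℝ, 0 ≤ x → 0 ≤ y → 0 ≤ (f x - f y) * (g x - g y)

def Asynchronous (f g : ℝ → ℝ) : Prop :=
  ∀ x y : ℝ, 0 ≤ x → 0 ≤ y → (f x - f y) * (g x - g y) ≤ 0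

/-!
Both q-integrals are weighted sums `I F = ∑ₖ wₖ F(xₖ)` with nonnegative weights `wₖ` at nodes
`xₖ = t q^{k/β} ∈ [0, t]`. Multiplying out the double sum over pairs of nodes shows that the
eight-term expression equals
`∑ₖ ∑ⱼ wₖ u(xₖ) w'ⱼ u(yⱼ) (f xₖ - f yⱼ) (g xₖ - g yⱼ) (h xₖ - h yⱼ)`,
and each difference `|F x - F y|` is bounded by the length of the interval containing the values
of `F`.
-/

open Set Filter Topology Asymptotics

section WeightedSums

variable {ι κ α : Type*}

theorem Summable.hasSum_prod_mul {a : ι → ℝ} {b : κ → ℝ} (ha : Summable a) (hb : Summable b) :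
    HasSum (fun p : ι × κ => a p.1 * b p.2) ((∑' i, a i) * ∑' j, b j) :=
  ha.hasSum.mul hb.hasSum (summable_mul_of_summable_norm ha.abs hb.abs)

theorem Asymptotics.IsBigO.mul_of_isBigO_one {l : Filter α} {P v f : α → ℝ} (hP : P =O[l] v)
    (hf : f =O[l] fun _ => (1 : ℝ)) : (fun a => P a * f a) =O[l] v := by
  simpa using hP.mul hf

theorem isBigO_one_of_mapsTo_Icc {s : Set α} {f : α → ℝ} {a b : ℝ} (hf : MapsTo f s (Icc a b)) :
    f =O[𝓟 s] fun _ => (1 : ℝ) :=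
  isBigO_principal.2 ⟨max |a| |b|, fun x hx => by
    simpa using abs_le_max_abs_abs (hf hx).1 (hf hx).2⟩

theorem summable_mul_comp_of_isBigO {s : Set α} {A : ι → ℝ} {x : ι → α} {P v : α → ℝ}
    (hv : Summable fun i => A i * v (x i)) (hx : ∀ i, x i ∈ s) (hP : P =O[𝓟 s] v) :
    Summable fun i => A i * P (x i) := by
  obtain ⟨C, hC⟩ := isBigO_principal.1 hP
  refine Summable.of_norm_bounded (hv.abs.mul_left C) fun i => ?_
  calc ‖A i * P (x i)‖ = |A i| * ‖P (x i)‖ := by rw [norm_mul, Real.norm_eq_abs]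
    _ ≤ |A i| * (C * ‖v (x i)‖) := by gcongr; exact hC _ (hx i)
    _ = C * |A i * v (x i)| := by rw [Real.norm_eq_abs, abs_mul]; ring

def tripleCorrelation (I J : (α → ℝ) → ℝ) (u f g h : α → ℝ) : ℝ :=
  I (fun s => u s * f s * g s * h s) * J u +
    I (fun s => u s * h s) * J (fun s => u s * f s * g s) +
    I (fun s => u s * g s) * J (fun s => u s * f s * h s) +
    I (fun s => u s * f s) * J (fun s => u s * g s * h s) -
    I (fun s => u s * g s * h s) * J (fun s => u s * f s) -
    I (fun s => u s * f s * h s) * J (fun s => u s * g s) -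
    I (fun s => u s * f s * g s) * J (fun s => u s * h s) -
    I u * J (fun s => u s * f s * g s * h s)

variable {s : Set α} {I J : (α → ℝ) → ℝ} {A : ι → ℝ} {B : κ → ℝ} {x : ι → α} {y : κ → α}
  {u f g h : α → ℝ}

theorem hasSum_tripleCorrelation (hI : ∀ P, I P = ∑' i, A i * P (x i))
    (hJ : ∀ Q, J Q = ∑' j, B j * Q (y j)) (hx : ∀ i, x i ∈ s) (hy : ∀ j, y j ∈ s)
    (hA : Summable fun i => A i * u (x i)) (hB : Summable fun j => B j * u (y j))
    (hf : f =O[𝓟 s] fun _ => (1 : ℝ)) (hg : g =O[𝓟 s] fun _ => (1 : ℝ))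
    (hh : h =O[𝓟 s] fun _ => (1 : ℝ)) :
    HasSum (fun p : ι × κ => A p.1 * u (x p.1) * (B p.2 * u (y p.2)) *
        ((f (x p.1) - f (y p.2)) * (g (x p.1) - g (y p.2)) * (h (x p.1) - h (y p.2))))
      (tripleCorrelation I J u f g h) := by
  have hprod : ∀ P Q : α → ℝ, P =O[𝓟 s] u → Q =O[𝓟 s] u →
      HasSum (fun p : ι × κ => A p.1 * P (x p.1) * (B p.2 * Q (y p.2))) (I P * J Q) :=
    fun P Q hP hQ => hI P ▸ hJ Q ▸
      (summable_mul_comp_of_isBigO hA hx hP).hasSum_prod_mul (summable_mul_comp_of_isBigO hB hy hQ)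
  have hu := isBigO_refl u (𝓟 s)
  have huf := hu.mul_of_isBigO_one hf
  have hug := hu.mul_of_isBigO_one hg
  have huh := hu.mul_of_isBigO_one hh
  have hufg := huf.mul_of_isBigO_one hg
  have hufh := huf.mul_of_isBigO_one hh
  have hugh := hug.mul_of_isBigO_one hh
  have hufgh := hufg.mul_of_isBigO_one hh
  have hsum := (((((((hprod _ _ hufgh hu).add (hprod _ _ huh hufg)).add (hprod _ _ hug hufh)).add
    (hprod _ _ huf hugh)).sub (hprod _ _ hugh huf)).sub (hprod _ _ hufh hug)).sub
    (hprod _ _ hufg huh)).sub (hprod _ _ hu hufgh)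
  exact hsum.congr_fun fun p => by ring

theorem abs_tripleCorrelation_le {ψ Ψ φ Φ ω Ω : ℝ} (hI : ∀ P, I P = ∑' i, A i * P (x i))
    (hJ : ∀ Q, J Q = ∑' j, B j * Q (y j)) (hx : ∀ i, x i ∈ s) (hy : ∀ j, y j ∈ s)
    (hA0 : ∀ i, 0 ≤ A i) (hB0 : ∀ j, 0 ≤ B j) (hu0 : ∀ a ∈ s, 0 ≤ u a)
    (hA : Summable fun i => A i * u (x i)) (hB : Summable fun j => B j * u (y j))
    (hf : MapsTo f s (Icc ψ Ψ)) (hg : MapsTo g s (Icc φ Φ)) (hh : MapsTo h s (Icc ω Ω)) :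
    |tripleCorrelation I J u f g h| ≤ I u * J u * ((Ψ - ψ) * (Φ - φ) * (Ω - ω)) := by
  set M := (Ψ - ψ) * (Φ - φ) * (Ω - ω)
  have hexp := hasSum_tripleCorrelation hI hJ hx hy hA hB (isBigO_one_of_mapsTo_Icc hf)
    (isBigO_one_of_mapsTo_Icc hg) (isBigO_one_of_mapsTo_Icc hh)
  have hbound : HasSum (fun p : ι × κ => A p.1 * u (x p.1) * (B p.2 * u (y p.2)) * M)
      (I u * J u * M) := by
    rw [hI, hJ]
    exact (hA.hasSum_prod_mul hB).mul_right M
  have hterm : ∀ a b, a ∈ s → b ∈ s → |(f a - f b) * (g a - g b) * (h a - h b)| ≤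
      (Ψ - ψ) * (Φ - φ) * (Ω - ω) := by
    intro a b ha hb
    have hf' := Real.dist_le_of_mem_Icc (hf ha) (hf hb)
    have hg' := Real.dist_le_of_mem_Icc (hg ha) (hg hb)
    have hh' := Real.dist_le_of_mem_Icc (hh ha) (hh hb)
    rw [abs_mul, abs_mul, ← Real.dist_eq, ← Real.dist_eq, ← Real.dist_eq]
    exact mul_le_mul (mul_le_mul hf' hg' dist_nonneg (dist_nonneg.trans hf')) hh' dist_nonneg
      (mul_nonneg (dist_nonneg.trans hf') (dist_nonneg.trans hg'))
  have hweight : ∀ p : ι × κ, 0 ≤ A p.1 * u (x p.1) * (B p.2 * u (y p.2)) := fun p =>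
    mul_nonneg (mul_nonneg (hA0 _) (hu0 _ (hx _))) (mul_nonneg (hB0 _) (hu0 _ (hy _)))
  have habs : ∀ p : ι × κ, |A p.1 * u (x p.1) * (B p.2 * u (y p.2)) *
      ((f (x p.1) - f (y p.2)) * (g (x p.1) - g (y p.2)) * (h (x p.1) - h (y p.2)))| ≤
      A p.1 * u (x p.1) * (B p.2 * u (y p.2)) * M := fun p => by
    rw [abs_mul, abs_of_nonneg (hweight p)]
    exact mul_le_mul_of_nonneg_left (hterm _ _ (hx _) (hy _)) (hweight p)
  rw [abs_le]
  exact ⟨hasSum_le (fun p => neg_le_of_abs_le (habs p)) hbound.neg hexp,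
    hasSum_le (fun p => le_of_abs_le (habs p)) hexp hbound⟩

end WeightedSums

section ErdelyiKober

theorem qPoch_succ (q a : ℝ) (k : ℕ) : qPoch q a (k + 1) = qPoch q a k * (1 - a * q ^ k) :=
  Finset.prod_range_succ _ k

theorem qPoch_pos {q a : ℝ} (hq0 : 0 ≤ q) (hq1 : q ≤ 1) (ha0 : 0 ≤ a) (ha1 : a < 1) (k : ℕ) :
    0 < qPoch q a k :=
  Finset.prod_pos fun _ _ =>
    sub_pos.2 <| (mul_le_of_le_one_right ha0 (pow_le_one₀ hq0 hq1)).trans_lt ha1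

noncomputable def ekCoeff (q η μ : ℝ) (k : ℕ) : ℝ :=
  qPoch q (q ^ μ) k / qPoch q q k * q ^ ((k : ℝ) * (η + 1))

noncomputable def ekWeight (q η μ β : ℝ) (k : ℕ) : ℝ :=
  β * (1 - q ^ (1 / β)) * (1 - q) ^ (μ - 1) * ekCoeff q η μ k

theorem EK_eq_tsum (q η μ β : ℝ) (F : ℝ → ℝ) (t : ℝ) :
    EK q η μ β F t = ∑' k : ℕ, ekWeight q η μ β k * F (t * q ^ ((k : ℝ) / β)) := by
  rw [EK, ← tsum_mul_left]
  simp only [ekWeight, ekCoeff, mul_assoc]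

variable {q η μ β : ℝ}

theorem ekCoeff_pos (hq : 0 < q) (hq1 : q < 1) (hμ : 0 < μ) (k : ℕ) : 0 < ekCoeff q η μ k :=
  mul_pos (div_pos (qPoch_pos hq.le hq1.le (by positivity) (Real.rpow_lt_one hq.le hq1 hμ) k)
    (qPoch_pos hq.le hq1.le hq.le hq1 k)) (Real.rpow_pos_of_pos hq _)

theorem ekCoeff_succ (hq : 0 < q) (k : ℕ) :
    ekCoeff q η μ (k + 1) =
      ekCoeff q η μ k * ((1 - q ^ μ * q ^ k) / (1 - q * q ^ k) * q ^ (η + 1)) := by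
  rw [ekCoeff, ekCoeff, qPoch_succ, qPoch_succ, Nat.cast_succ, add_one_mul, Real.rpow_add hq,
    mul_div_mul_comm]
  ring

theorem summable_ekCoeff (hq : 0 < q) (hq1 : q < 1) (hμ : 0 < μ) (hη : -1 < η) :
    Summable (ekCoeff q η μ) := by
  have hpos := ekCoeff_pos (η := η) hq hq1 hμ
  have hratio : ∀ k : ℕ, ‖ekCoeff q η μ (k + 1)‖ / ‖ekCoeff q η μ k‖ =
      (1 - q ^ μ * q ^ k) / (1 - q * q ^ k) * q ^ (η + 1) := fun k => by
    rw [Real.norm_of_nonneg (hpos _).le, Real.norm_of_nonneg (hpos _).le, ekCoeff_succ hq,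
      mul_div_cancel_left₀ _ (hpos k).ne']
  have hpow := tendsto_pow_atTop_nhds_zero_of_lt_one hq.le hq1
  have hlim := (((tendsto_const_nhds (x := (1 : ℝ))).sub (hpow.const_mul (q ^ μ))).div
    ((tendsto_const_nhds (x := (1 : ℝ))).sub (hpow.const_mul q)) (by simp)).mul_const (q ^ (η + 1))
  refine summable_of_ratio_test_tendsto_lt_one (l := q ^ (η + 1))
    (Real.rpow_lt_one hq.le hq1 (by linarith)) (Eventually.of_forall fun k => (hpos k).ne') ?_
  simp_rw [hratio]
  simpa using hlim

theorem ekWeight_nonneg (hq : 0 < q) (hq1 : q < 1) (hβ : 0 < β) (hμ : 0 < μ) (k : ℕ) :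
    0 ≤ ekWeight q η μ β k :=
  mul_nonneg (mul_nonneg (mul_nonneg hβ.le
    (sub_nonneg.2 (Real.rpow_le_one hq.le hq1.le (by positivity))))
    (Real.rpow_nonneg (sub_nonneg.2 hq1.le) _)) (ekCoeff_pos hq hq1 hμ k).le

theorem mul_rpow_mem_Icc {t : ℝ} (ht : 0 ≤ t) (hq : 0 < q) (hq1 : q < 1) (hβ : 0 < β) (k : ℕ) :
    t * q ^ ((k : ℝ) / β) ∈ Icc 0 t :=
  ⟨mul_nonneg ht (Real.rpow_nonneg hq.le _),
    mul_le_of_le_one_right ht (Real.rpow_le_one hq.le hq1.le (by positivity))⟩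

theorem summable_ekWeight_mul {t : ℝ} {u : ℝ → ℝ} (hq : 0 < q) (hq1 : q < 1) (hβ : 0 < β)
    (hμ : 0 < μ) (hη : -1 < η) (ht : 0 ≤ t) (hu : ContinuousOn u (Icc 0 t)) :
    Summable fun k : ℕ => ekWeight q η μ β k * u (t * q ^ ((k : ℝ) / β)) := by
  have hone : Summable fun k : ℕ =>
      ekWeight q η μ β k * (fun _ => (1 : ℝ)) (t * q ^ ((k : ℝ) / β)) := by
    simpa only [ekWeight, mul_one] using (summable_ekCoeff hq hq1 hμ hη).mul_left _
  exact summable_mul_comp_of_isBigO hone (mul_rpow_mem_Icc ht hq hq1 hβ)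
    (hu.isBigO_principal isCompact_Icc (by norm_num))

end ErdelyiKober

theorem thm4_general
    (q₁ q₂ β δ μ ν η ζ : ℝ)
    (hq₁ : 0 < q₁) (hq₁' : q₁ < 1) (hq₂ : 0 < q₂) (hq₂' : q₂ < 1)
    (hβ : 0 < β) (hδ : 0 < δ) (hμ : 0 < μ) (hν : 0 < ν)
    (hη : -1 < η) (hζ : -1 < ζ)
    (f g h u : ℝ → ℝ)
    (hcu : ContinuousOn u (Set.Ici 0))
    (hu0 : ∀ x : ℝ, 0 ≤ x → 0 ≤ u x)
    (ψ Ψ φ Φ ω Ω : ℝ)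
    (hfb : ∀ x : ℝ, 0 ≤ x → ψ ≤ f x ∧ f x ≤ Ψ)
    (hgb : ∀ x : ℝ, 0 ≤ x → φ ≤ g x ∧ g x ≤ Φ)
    (hhb : ∀ x : ℝ, 0 ≤ x → ω ≤ h x ∧ h x ≤ Ω)
    (t : ℝ) (ht : 0 < t) :
    |EK q₁ η μ β (fun s => u s * f s * g s * h s) t * EK q₂ ζ ν δ u t +
        EK q₁ η μ β (fun s => u s * h s) t * EK q₂ ζ ν δ (fun s => u s * f s * g s) t +
        EK q₁ η μ β (fun s => u s * g s) t * EK q₂ ζ ν δ (fun s => u s * f s * h s) t +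
        EK q₁ η μ β (fun s => u s * f s) t * EK q₂ ζ ν δ (fun s => u s * g s * h s) t -
        EK q₁ η μ β (fun s => u s * g s * h s) t * EK q₂ ζ ν δ (fun s => u s * f s) t -
        EK q₁ η μ β (fun s => u s * f s * h s) t * EK q₂ ζ ν δ (fun s => u s * g s) t -
        EK q₁ η μ β (fun s => u s * f s * g s) t * EK q₂ ζ ν δ (fun s => u s * h s) t -
        EK q₁ η μ β u t * EK q₂ ζ ν δ (fun s => u s * f s * g s * h s) t|
      ≤ EK q₁ η μ β u t * EK q₂ ζ ν δ u t * ((Ψ - ψ) * (Φ - φ) * (Ω - ω)) := by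
  have hcu' : ContinuousOn u (Icc 0 t) := hcu.mono Icc_subset_Ici_self
  exact abs_tripleCorrelation_le (I := (EK q₁ η μ β · t)) (J := (EK q₂ ζ ν δ · t)) (s := Ici 0)
    (EK_eq_tsum q₁ η μ β · t) (EK_eq_tsum q₂ ζ ν δ · t)
    (fun k => (mul_rpow_mem_Icc ht.le hq₁ hq₁' hβ k).1)
    (fun k => (mul_rpow_mem_Icc ht.le hq₂ hq₂' hδ k).1)
    (ekWeight_nonneg hq₁ hq₁' hβ hμ) (ekWeight_nonneg hq₂ hq₂' hδ hν) hu0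
    (summable_ekWeight_mul hq₁ hq₁' hβ hμ hη ht.le hcu')
    (summable_ekWeight_mul hq₂ hq₂' hδ hν hζ ht.le hcu') hfb hgb hhb

theorem thm4
    (q₁ q₂ β δ μ ν η ζ : ℝ)
    (hq₁ : 0 < q₁) (hq₁' : q₁ < 1) (hq₂ : 0 < q₂) (hq₂' : q₂ < 1)
    (hβ : 0 < β) (hδ : 0 < δ) (hμ : 0 < μ) (hν : 0 < ν)
    (hη : -1 < η) (hζ : -1 < ζ)
    (f g h u : ℝ → ℝ)
    (hcf : ContinuousOn f (Set.Ici 0))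
    (hcg : ContinuousOn g (Set.Ici 0))
    (hch : ContinuousOn h (Set.Ici 0))
    (hcu : ContinuousOn u (Set.Ici 0))
    (hfg : Synchronous f g) (hfh : Synchronous f h) (hgh : Synchronous g h)
    (hu0 : ∀ x : ℝ, 0 ≤ x → 0 ≤ u x)
    (ψ Ψ φ Φ ω Ω : ℝ)
    (hfb : ∀ x : ℝ, 0 ≤ x → ψ ≤ f x ∧ f x ≤ Ψ)
    (hgb : ∀ x : ℝ, 0 ≤ x → φ ≤ g x ∧ g x ≤ Φ)
    (hhb : ∀ x : ℝ, 0 ≤ x → ω ≤ h x ∧ h x ≤ Ω)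
    (t : ℝ) (ht : 0 < t) :
    |EK q₁ η μ β (fun s => u s * f s * g s * h s) t * EK q₂ ζ ν δ u t +
        EK q₁ η μ β (fun s => u s * h s) t * EK q₂ ζ ν δ (fun s => u s * f s * g s) t +
        EK q₁ η μ β (fun s => u s * g s) t * EK q₂ ζ ν δ (fun s => u s * f s * h s) t +
        EK q₁ η μ β (fun s => u s * f s) t * EK q₂ ζ ν δ (fun s => u s * g s * h s) t -
        EK q₁ η μ β (fun s => u s * g s * h s) t * EK q₂ ζ ν δ (fun s => u s * f s) t -
        EK q₁ η μ β (fun s => u s * f s * h s) t * EK q₂ ζ ν δ (fun s => u s * g s) t -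
        EK q₁ η μ β (fun s => u s * f s * g s) t * EK q₂ ζ ν δ (fun s => u s * h s) t -
        EK q₁ η μ β u t * EK q₂ ζ ν δ (fun s => u s * f s * g s * h s) t|
      ≤ EK q₁ η μ β u t * EK q₂ ζ ν δ u t * ((Ψ - ψ) * (Φ - φ) * (Ω - ω)) :=
  thm4_general q₁ q₂ β δ μ ν η ζ hq₁ hq₁' hq₂ hq₂' hβ hδ hμ hν hη hζ f g h u hcu hu0 ψ Ψ φ Φ ω Ω hfb
    hgb hhb t ht
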